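/- arXiv:2204.00595 — 6 statements merged into one kernel-verified Lean document; each statement's English description precedes it below -/
import Mathlib

section
/- Let n = m² for an integer m ≥ 2, let 𝔽 be a field, and let M be an n×n matrix over 𝔽. Then M is a Monarch matrix (i.e., M = P L Pᵀ R for some L, R ∈ BD(m,n), where P = P_{(m,n)}) if and only if for every pair (j,k) with 0 ≤ j,k ≤ m−1, the m×m matrix M_{jk} defined by M_{jk}[ℓ,i] = M[ℓ·m + j, k·m + i] (0 ≤ ℓ,i ≤ m−1) has rank at most 1. -/
open Matrix

/-- `BD b n R`: `R` is block-diagonal with `n/b` diagonal blocks of size `b × b`. -/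
def BD {𝔽 : Type*} [Field 𝔽] (b n : ℕ) (R : Matrix (Fin n) (Fin n) 𝔽) : Prop :=
  ∀ i j : Fin n, i.val / b ≠ j.val / b → R i j = 0

/-- The permutation matrix `P_{(b,n)}`, with `P[σ_{(b,n)}(j), j] = 1` where
`σ_{(b,n)}(j) = (j mod b) * (n/b) + ⌊j/b⌋`. -/
def permMat (𝔽 : Type*) [Field 𝔽] (b n : ℕ) : Matrix (Fin n) (Fin n) 𝔽 :=
  Matrix.of fun i j => if i.val = j.val % b * (n / b) + j.val / b then 1 else 0

lemma idx_lt {m : ℕ} (a c : Fin m) : a.val * m + c.val < m * m := by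
  have h1 : a.val + 1 ≤ m := a.isLt
  calc a.val * m + c.val < a.val * m + m := by omega
    _ = (a.val + 1) * m := by ring
    _ ≤ m * m := Nat.mul_le_mul h1 le_rfl

/-!
Index `Fin (m * m)` by pairs, `(a, c) ↦ a * m + c`. Then `P` swaps the two coordinates, and for
block-diagonal `L`, `R` the sum defining the entry of `P L Pᵀ R` at `((ℓ, j), (k, i))` has the
single nonzero term `L[(j, ℓ), (j, k)] * R[(k, j), (k, i)]`. So the block `M_{jk}` is the outer
product of a column of the `j`-th block of `L` with a row of the `k`-th block of `R`. Conversely,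
writing every block as an outer product `u_{jk} v_{jk}ᵀ` and filling the blocks of `L` with the
columns `u_{jk}` and those of `R` with the rows `v_{jk}` reverses the computation.
-/

namespace Matrix

variable {K m n : Type*} [Field K] [Fintype n]

theorem rank_le_one_iff_exists_vecMulVec (A : Matrix m n K) :
    A.rank ≤ 1 ↔ ∃ u v, A = vecMulVec u v := by
  refine ⟨fun h => ?_, fun ⟨u, v, hA⟩ => hA ▸ rank_vecMulVec_le u v⟩
  have : Module.Finite K (Submodule.span K (Set.range A.col)) :=
    FiniteDimensional.span_of_finite K (Set.finite_range _)
  rw [rank_eq_finrank_span_cols, Submodule.finrank_le_one_iff_isPrincipal] at h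
  obtain ⟨u, hu⟩ := h
  have hcol (j : n) : ∃ c : K, c • u = A.col j := by
    rw [← Submodule.mem_span_singleton, ← hu]
    exact Submodule.subset_span ⟨j, rfl⟩
  choose v hv using hcol
  refine ⟨u, v, ext fun i j => ?_⟩
  rw [vecMulVec_apply, ← col_apply A j i, ← hv j, Pi.smul_apply, smul_eq_mul, mul_comm]

end Matrix

section BlockIndex

variable {𝔽 : Type*} [Field 𝔽] {m : ℕ}

def blockIndex (m : ℕ) : Fin m × Fin m ≃ Fin (m * m) := finProdFinEquiv

theorem blockIndex_apply (a c : Fin m) :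
    blockIndex m (a, c) = ⟨a.val * m + c.val, idx_lt a c⟩ := by
  ext
  simp only [blockIndex, finProdFinEquiv_apply_val]
  ring

theorem blockIndex_val_div (a c : Fin m) : (blockIndex m (a, c)).val / m = a := by
  simp only [blockIndex, finProdFinEquiv_apply_val]
  rw [Nat.add_mul_div_left _ _ c.pos, Nat.div_eq_of_lt c.isLt, zero_add]

theorem blockIndex_val_mod (a c : Fin m) : (blockIndex m (a, c)).val % m = c := by
  simp only [blockIndex, finProdFinEquiv_apply_val, Nat.add_mul_mod_self_left,
    Nat.mod_eq_of_lt c.isLt]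

theorem BD_iff_blockIndex (L : Matrix (Fin (m * m)) (Fin (m * m)) 𝔽) :
    BD m (m * m) L ↔
      ∀ a c a' c', a ≠ a' → L (blockIndex m (a, c)) (blockIndex m (a', c')) = 0 := by
  refine ⟨fun hL a c a' c' ha => hL _ _ ?_, fun hL i j hij => ?_⟩
  · simpa only [blockIndex_val_div, ne_eq, Fin.val_inj]
  · obtain ⟨⟨a, c⟩, rfl⟩ := (blockIndex m).surjective i
    obtain ⟨⟨a', c'⟩, rfl⟩ := (blockIndex m).surjective j
    exact hL a c a' c' (by simpa only [blockIndex_val_div, ne_eq, Fin.val_inj] using hij)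

/-- The permutation `σ_{(m, m²)}`, exchanging the two base-`m` digits. -/
def digitSwap (m : ℕ) : Equiv.Perm (Fin (m * m)) :=
  (blockIndex m).symm.trans ((Equiv.prodComm _ _).trans (blockIndex m))

@[simp]
theorem digitSwap_blockIndex (a c : Fin m) :
    digitSwap m (blockIndex m (a, c)) = blockIndex m (c, a) := by
  simp [digitSwap]

theorem permMat_eq_toMatrix : permMat 𝔽 m (m * m) = (digitSwap m).toPEquiv.toMatrix := by
  ext i j
  obtain ⟨⟨a, c⟩, rfl⟩ := (blockIndex m).surjective i
  obtain ⟨⟨b, d⟩, rfl⟩ := (blockIndex m).surjective j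
  have hm : 0 < m := a.pos
  have hσ : (blockIndex m (b, d)).val % m * (m * m / m) + (blockIndex m (b, d)).val / m =
      (blockIndex m (d, b)).val := by
    rw [blockIndex_val_mod, blockIndex_val_div, Nat.mul_div_cancel_left _ hm, blockIndex_apply]
  simp only [permMat, of_apply, hσ, Fin.val_inj, PEquiv.toMatrix_apply, Equiv.toPEquiv_apply,
    Option.mem_def, Option.some_inj, digitSwap_blockIndex, (blockIndex m).injective.eq_iff,
    Prod.ext_iff, and_comm]

theorem permMat_mul_mul_transpose (L : Matrix (Fin (m * m)) (Fin (m * m)) 𝔽) :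
    permMat 𝔽 m (m * m) * L * (permMat 𝔽 m (m * m))ᵀ =
      L.submatrix (digitSwap m) (digitSwap m) := by
  rw [permMat_eq_toMatrix, ← PEquiv.toMatrix_symm, ← Equiv.toPEquiv_symm,
    PEquiv.toMatrix_toPEquiv_mul, PEquiv.mul_toMatrix_toPEquiv, Equiv.symm_symm,
    submatrix_submatrix]
  rfl

theorem monarch_apply_blockIndex {L R : Matrix (Fin (m * m)) (Fin (m * m)) 𝔽}
    (hL : BD m (m * m) L) (hR : BD m (m * m) R) (ℓ j k i : Fin m) :
    (permMat 𝔽 m (m * m) * L * (permMat 𝔽 m (m * m))ᵀ * R)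
        (blockIndex m (ℓ, j)) (blockIndex m (k, i)) =
      L (blockIndex m (j, ℓ)) (blockIndex m (j, k)) *
        R (blockIndex m (k, j)) (blockIndex m (k, i)) := by
  rw [permMat_mul_mul_transpose, mul_apply, ← (blockIndex m).sum_comp,
    Fintype.sum_eq_single (k, j)]
  · simp
  rintro ⟨p, q⟩ hpq
  simp only [submatrix_apply, digitSwap_blockIndex]
  by_cases hp : p = k
  · subst hp
    rw [(BD_iff_blockIndex L).1 hL _ _ _ _ fun h => hpq (by rw [h]), zero_mul]
  · rw [(BD_iff_blockIndex R).1 hR _ _ _ _ hp, mul_zero]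

def bdOfBlocks (d : Fin m → Matrix (Fin m) (Fin m) 𝔽) : Matrix (Fin (m * m)) (Fin (m * m)) 𝔽 :=
  (blockDiagonal d).submatrix (fun x => ((blockIndex m).symm x).swap)
    (fun x => ((blockIndex m).symm x).swap)

theorem BD_bdOfBlocks (d : Fin m → Matrix (Fin m) (Fin m) 𝔽) : BD m (m * m) (bdOfBlocks d) :=
  (BD_iff_blockIndex _).2 fun _ _ _ _ h => by simp [bdOfBlocks, blockDiagonal_apply_ne _ _ _ h]

@[simp]
theorem bdOfBlocks_apply_blockIndex (d : Fin m → Matrix (Fin m) (Fin m) 𝔽) (a c c' : Fin m) :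
    bdOfBlocks d (blockIndex m (a, c)) (blockIndex m (a, c')) = d a c c' := by
  simp [bdOfBlocks]

end BlockIndex

theorem monarch_iff_blocks_rank_le_one_general {𝔽 : Type*} [Field 𝔽] (m : ℕ)
    (M : Matrix (Fin (m * m)) (Fin (m * m)) 𝔽) :
    (∃ L R : Matrix (Fin (m * m)) (Fin (m * m)) 𝔽,
        BD m (m * m) L ∧ BD m (m * m) R ∧
        M = permMat 𝔽 m (m * m) * L * (permMat 𝔽 m (m * m))ᵀ * R) ↔
    (∀ j k : Fin m,
      (Matrix.of fun ℓ i : Fin m =>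
        M ⟨ℓ.val * m + j.val, idx_lt ℓ j⟩ ⟨k.val * m + i.val, idx_lt k i⟩).rank ≤ 1) := by
  simp_rw [← blockIndex_apply, rank_le_one_iff_exists_vecMulVec]
  constructor
  · rintro ⟨L, R, hL, hR, rfl⟩ j k
    exact ⟨_, _, ext fun ℓ i => monarch_apply_blockIndex hL hR ℓ j k i⟩
  · intro h
    choose u v huv using h
    refine ⟨bdOfBlocks fun j => of fun ℓ k => u j k ℓ, bdOfBlocks fun k => of fun j i => v j k i,
      BD_bdOfBlocks _, BD_bdOfBlocks _, ?_⟩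
    ext x y
    obtain ⟨⟨ℓ, j⟩, rfl⟩ := (blockIndex m).surjective x
    obtain ⟨⟨k, i⟩, rfl⟩ := (blockIndex m).surjective y
    rw [monarch_apply_blockIndex (BD_bdOfBlocks _) (BD_bdOfBlocks _)]
    simpa [vecMulVec_apply] using congrFun₂ (huv j k) ℓ i

/-- `M` is a Monarch matrix (i.e. `M = P L Pᵀ R` with `L, R ∈ BD(m, m²)`
and `P = P_{(m,m²)}`) iff every `m × m` block `M_{jk}[ℓ,i] = M[ℓm+j, km+i]` has rank ≤ 1. -/
theorem monarch_iff_blocks_rank_le_one {𝔽 : Type*} [Field 𝔽] (m : ℕ) (hm : 2 ≤ m)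
    (M : Matrix (Fin (m * m)) (Fin (m * m)) 𝔽) :
    (∃ L R : Matrix (Fin (m * m)) (Fin (m * m)) 𝔽,
        BD m (m * m) L ∧ BD m (m * m) R ∧
        M = permMat 𝔽 m (m * m) * L * (permMat 𝔽 m (m * m))ᵀ * R) ↔
    (∀ j k : Fin m,
      (Matrix.of fun ℓ i : Fin m =>
        M ⟨ℓ.val * m + j.val, idx_lt ℓ j⟩ ⟨k.val * m + i.val, idx_lt k i⟩).rank ≤ 1) :=
  monarch_iff_blocks_rank_le_one_general m M
end

section
/- Let 1 < b < n be integers with b dividing n, and let L ∈ DB(b,n) over a field 𝔽. Then P_{(b,n)} · L · P_{(b,n)}ᵀ ∈ BD(n/b, n), i.e., conjugating L by the permutation matrix P_{(b,n)} yields a block-diagonal matrix with b diagonal blocks of size (n/b)×(n/b). -/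
open Matrix

/-- `DB b n L`: `L[i,j] = 0` whenever `i ≢ j (mod b)`. -/
def DB {𝔽 : Type*} [Field 𝔽] (b n : ℕ) (L : Matrix (Fin n) (Fin n) 𝔽) : Prop :=
  ∀ i j : Fin n, i.val % b ≠ j.val % b → L i j = 0

/-!
Label row `i` of `P_{(b,n)}` by its block `i / (n/b)` and column `k` by its residue `k mod b`;
then `P_{(b,n)}` only has nonzero entries where the labels agree, and `L ∈ DB(b,n)` only where
the residues agree. A nonzero term `P[i,k] L[k,x] P[j,x]` of `(P L Pᵀ)[i,j]` therefore forces
`i` and `j` into the same block.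
-/

theorem Matrix.mul_mul_transpose_apply_eq_zero_of_ne {ι κ α R : Type*} [Fintype κ]
    [NonUnitalNonAssocSemiring R] {A : Matrix ι κ R} {L : Matrix κ κ R} {f : ι → α} {g : κ → α}
    (hA : ∀ i k, f i ≠ g k → A i k = 0) (hL : ∀ k x, g k ≠ g x → L k x = 0)
    {i j : ι} (hij : f i ≠ f j) : (A * L * Aᵀ) i j = 0 := by
  simp only [mul_apply, transpose_apply, Finset.sum_mul]
  refine Finset.sum_eq_zero fun x _ => Finset.sum_eq_zero fun k _ => ?_
  by_cases hik : f i = g k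
  · by_cases hkx : g k = g x
    · rw [hA j x fun hjx => hij (hik.trans (hkx.trans hjx.symm)), mul_zero]
    · rw [hL k x hkx, mul_zero, zero_mul]
  · rw [hA i k hik, zero_mul, zero_mul]

theorem permMat_eq_zero_of_div_ne_mod {𝔽 : Type*} [Field 𝔽] {b n : ℕ} (hdvd : b ∣ n)
    (i k : Fin n) (h : i.val / (n / b) ≠ k.val % b) : permMat 𝔽 b n i k = 0 := by
  refine if_neg fun hi => h ?_
  have hlt : k.val / b < n / b := Nat.div_lt_div_of_lt_of_dvd hdvd k.isLt
  rw [hi, Nat.add_comm, Nat.add_mul_div_right _ _ (Nat.zero_lt_of_lt hlt), Nat.div_eq_of_lt hlt,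
    Nat.zero_add]

theorem db_conj_perm_mem_bd_general {𝔽 : Type*} [Field 𝔽] (b n : ℕ)
    (hdvd : b ∣ n)
    (L : Matrix (Fin n) (Fin n) 𝔽) (hL : DB b n L) :
    BD (n / b) n (permMat 𝔽 b n * L * (permMat 𝔽 b n)ᵀ) :=
  fun _ _ => mul_mul_transpose_apply_eq_zero_of_ne (permMat_eq_zero_of_div_ne_mod hdvd) hL

/-- if `L ∈ DB(b,n)` then `P_{(b,n)} L P_{(b,n)}ᵀ ∈ BD(n/b, n)`. -/
theorem db_conj_perm_mem_bd {𝔽 : Type*} [Field 𝔽] (b n : ℕ)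
    (hb : 1 < b) (hbn : b < n) (hdvd : b ∣ n)
    (L : Matrix (Fin n) (Fin n) 𝔽) (hL : DB b n L) :
    BD (n / b) n (permMat 𝔽 b n * L * (permMat 𝔽 b n)ᵀ) :=
  db_conj_perm_mem_bd_general b n hdvd L hL
end

section
/- Let n ≥ 4 be a power of 2 and let b ∈ (1, n) be an integer dividing n. Then every butterfly matrix of size n×n lies in the Monarch class M(b,n); that is, B^{(n)} ⊆ M(b,n). -/
open Matrix

/-- Butterfly class `B^{(n)}` for `n = 2^k`: products `B_n · B_{n/2} · ⋯ · B_2` where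
`B_{2^i}` is a butterfly factor matrix of size `2^i`, i.e. lies in
`BD(2^i, n) ∩ DB(2^{i-1}, n)`. -/
def Butterfly {𝔽 : Type*} [Field 𝔽] (n k : ℕ) (M : Matrix (Fin n) (Fin n) 𝔽) : Prop :=
  ∃ B : ℕ → Matrix (Fin n) (Fin n) 𝔽,
    (∀ i, 1 ≤ i → i ≤ k → BD (2 ^ i) n (B i) ∧ DB (2 ^ (i - 1)) n (B i)) ∧
    M = (((List.range k).map fun t => B (k - t)).prod)

/-!
Split the butterfly product `B_{2^k} ⋯ B_2` at `b = 2^j`. A factor `B_{2^i}` with `i > j` lies in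
`DB(2^{i-1})`, hence in `DB(2^j)` since `2^j ∣ 2^{i-1}`; a factor with `i ≤ j` lies in `BD(2^i)`, hence
in `BD(2^j)` since `2^i ∣ 2^j`. Both classes are closed under products, so the left part of the
product is in `DB(b)` and the right part in `BD(b)`.
-/

section BlockDiagonal

variable {ι R α β : Type*} [Fintype ι] [DecidableEq ι] [Semiring R]

def blockDiagonalSubmonoid (f : ι → α) : Submonoid (Matrix ι ι R) where
  carrier := {A : Matrix ι ι R | ∀ i j, f i ≠ f j → A i j = 0}
  one_mem' i j h := one_apply_ne (ne_of_apply_ne f h)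
  mul_mem' {A B} hA hB i j h := by
    refine (mul_apply (M := A)).trans (Finset.sum_eq_zero fun x _ => ?_)
    by_cases hx : f i = f x
    · rw [hB x j fun hxj => h (hx.trans hxj), mul_zero]
    · rw [hA i x hx, zero_mul]

theorem blockDiagonalSubmonoid_mono {f : ι → α} {g : ι → β}
    (h : ∀ i j, g i = g j → f i = f j) :
    blockDiagonalSubmonoid (R := R) g ≤ blockDiagonalSubmonoid f :=
  fun _ hA i j hij => hA i j (mt (h i j) hij)

end BlockDiagonal

section Monarch

variable {𝔽 : Type*} [Field 𝔽] {b c n : ℕ}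

theorem BD_iff_mem_blockDiagonalSubmonoid {R : Matrix (Fin n) (Fin n) 𝔽} :
    BD b n R ↔ R ∈ blockDiagonalSubmonoid fun i : Fin n => i.val / b :=
  Iff.rfl

theorem DB_iff_mem_blockDiagonalSubmonoid {L : Matrix (Fin n) (Fin n) 𝔽} :
    DB b n L ↔ L ∈ blockDiagonalSubmonoid fun i : Fin n => i.val % b :=
  Iff.rfl

theorem BD.of_dvd {R : Matrix (Fin n) (Fin n) 𝔽} (hcb : c ∣ b) (h : BD c n R) : BD b n R := by
  obtain ⟨d, rfl⟩ := hcb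
  refine blockDiagonalSubmonoid_mono (fun i j hij => ?_) h
  simp only [← Nat.div_div_eq_div_mul, hij]

theorem DB.of_dvd {L : Matrix (Fin n) (Fin n) 𝔽} (hbc : b ∣ c) (h : DB c n L) : DB b n L :=
  blockDiagonalSubmonoid_mono (fun i j hij => by
    rw [← Nat.mod_mod_of_dvd i.val hbc, ← Nat.mod_mod_of_dvd j.val hbc, hij]) h

theorem Butterfly.exists_DB_mul_BD {k : ℕ} {M : Matrix (Fin n) (Fin n) 𝔽} (hM : Butterfly n k M)
    {j : ℕ} (hj : j ≤ k) :
    ∃ L R : Matrix (Fin n) (Fin n) 𝔽, DB (2 ^ j) n L ∧ BD (2 ^ j) n R ∧ M = L * R := by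
  obtain ⟨B, hB, rfl⟩ := hM
  refine ⟨((List.range (k - j)).map fun t => B (k - t)).prod,
    ((List.range j).map fun t => B (j - t)).prod, ?_, ?_, ?_⟩
  · refine DB_iff_mem_blockDiagonalSubmonoid.2 (Submonoid.list_prod_mem _ ?_)
    simp only [List.forall_mem_map, List.mem_range]
    intro t ht
    exact (hB (k - t) (by omega) (by omega)).2.of_dvd (pow_dvd_pow 2 (by omega))
  · refine BD_iff_mem_blockDiagonalSubmonoid.2 (Submonoid.list_prod_mem _ ?_)
    simp only [List.forall_mem_map, List.mem_range]
    intro t ht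
    exact (hB (j - t) (by omega) (by omega)).1.of_dvd (pow_dvd_pow 2 (by omega))
  · have hsplit : List.range k = List.range (k - j) ++ (List.range j).map (k - j + ·) := by
      rw [← List.range_add, Nat.sub_add_cancel hj]
    rw [hsplit, List.map_append, List.prod_append, List.map_map]
    congr 3 with t
    simp only [Function.comp_apply]
    congr 1
    omega

end Monarch

theorem butterfly_subset_monarch_general {𝔽 : Type*} [Field 𝔽] (k n : ℕ)
    (hn : n = 2 ^ k)
    (b : ℕ) (hdvd : b ∣ n)
    (M : Matrix (Fin n) (Fin n) 𝔽) (hM : Butterfly n k M) :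
    ∃ L R : Matrix (Fin n) (Fin n) 𝔽, DB b n L ∧ BD b n R ∧ M = L * R := by
  obtain ⟨j, hjk, rfl⟩ := (Nat.dvd_prime_pow Nat.prime_two).mp (hn ▸ hdvd)
  exact hM.exists_DB_mul_BD hjk

/-- for `n = 2^k ≥ 4` and any `b ∈ (1,n)` dividing `n`,
every butterfly matrix lies in the Monarch class `M(b,n)`. -/
theorem butterfly_subset_monarch {𝔽 : Type*} [Field 𝔽] (k n : ℕ)
    (hk : 2 ≤ k) (hn : n = 2 ^ k)
    (b : ℕ) (hb : 1 < b) (hbn : b < n) (hdvd : b ∣ n)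
    (M : Matrix (Fin n) (Fin n) 𝔽) (hM : Butterfly n k M) :
    ∃ L R : Matrix (Fin n) (Fin n) 𝔽, DB b n L ∧ BD b n R ∧ M = L * R :=
  butterfly_subset_monarch_general k n hn b hdvd M hM
end

section
/- Let n be a power of 2 and let b be a power of 2 with 1 < b < n. For each power of 2 i with 2b ≤ i ≤ n, let B_i be a butterfly factor matrix of size i (i.e., B_i ∈ BD(i,n) ∩ DB(i/2,n)). Then the product B_n · B_{n/2} · ⋯ · B_{2b} lies in DB(b,n). -/
/-!
Matrices supported on `i ≡ j (mod b)` form a multiplicative submonoid, and it contains every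
factor `B_i` of the product, since `2 ^ s ∣ 2 ^ (i - 1)` for `i > s`.
-/

open Matrix

namespace DB

variable {𝔽 : Type*} [Field 𝔽] {b n : ℕ}

theorem mono {c : ℕ} (hbc : b ∣ c) {L : Matrix (Fin n) (Fin n) 𝔽} (hL : DB c n L) :
    DB b n L := fun i j hij =>
  hL i j fun h => hij (by rw [← Nat.mod_mod_of_dvd _ hbc, h, Nat.mod_mod_of_dvd _ hbc])

theorem one : DB b n (1 : Matrix (Fin n) (Fin n) 𝔽) := fun _ _ hij =>
  one_apply_ne fun h => hij (by rw [h])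

theorem mul {P Q : Matrix (Fin n) (Fin n) 𝔽} (hP : DB b n P) (hQ : DB b n Q) :
    DB b n (P * Q) := by
  intro i j hij
  rw [mul_apply]
  refine Finset.sum_eq_zero fun m _ => ?_
  by_cases him : i.val % b = m.val % b
  · rw [hQ m j (him ▸ hij), mul_zero]
  · rw [hP i m him, zero_mul]

variable (𝔽 b n) in
def submonoid : Submonoid (Matrix (Fin n) (Fin n) 𝔽) where
  carrier := {L | DB b n L}
  mul_mem' := mul
  one_mem' := one

theorem list_prod {l : List (Matrix (Fin n) (Fin n) 𝔽)} (hl : ∀ L ∈ l, DB b n L) :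
    DB b n l.prod :=
  Submonoid.list_prod_mem (submonoid 𝔽 b n) hl

end DB

theorem butterfly_prefix_in_db_general {𝔽 : Type*} [Field 𝔽] (k s n b : ℕ)
    (hb : b = 2 ^ s)
    (B : ℕ → Matrix (Fin n) (Fin n) 𝔽)
    (hB : ∀ i, s + 1 ≤ i → i ≤ k → BD (2 ^ i) n (B i) ∧ DB (2 ^ (i - 1)) n (B i)) :
    DB b n (((List.range (k - s)).map fun t => B (k - t)).prod) := by
  subst hb
  refine DB.list_prod ?_
  simp only [List.mem_map, List.mem_range]
  rintro _ ⟨t, ht, rfl⟩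
  exact (hB (k - t) (by omega) (by omega)).2.mono (pow_dvd_pow 2 (by omega))

/-- for `n = 2^k`, `b = 2^s` with `1 < b < n`, and butterfly factor matrices
`B_i ∈ BD(2^i, n) ∩ DB(2^{i-1}, n)` for `s+1 ≤ i ≤ k`, the product
`B_n · B_{n/2} · ⋯ · B_{2b}` lies in `DB(b,n)`. -/
theorem butterfly_prefix_in_db {𝔽 : Type*} [Field 𝔽] (k s n b : ℕ)
    (hn : n = 2 ^ k) (hb : b = 2 ^ s) (hs : 1 ≤ s) (hsk : s < k)
    (B : ℕ → Matrix (Fin n) (Fin n) 𝔽)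
    (hB : ∀ i, s + 1 ≤ i → i ≤ k → BD (2 ^ i) n (B i) ∧ DB (2 ^ (i - 1)) n (B i)) :
    DB b n (((List.range (k - s)).map fun t => B (k - t)).prod) :=
  butterfly_prefix_in_db_general k s n b hb B hB
end

section
/- Let n be a power of 2 and let b be a power of 2 with 1 < b ≤ n. For each power of 2 i with 2 ≤ i ≤ b, let B_i be a butterfly factor matrix of size i (i.e., B_i ∈ BD(i,n) ∩ DB(i/2,n)). Then the product B_b · B_{b/2} · ⋯ · B_2 lies in BD(b,n). -/
open Matrix

/-! Only the block-diagonal half of the butterfly condition matters: each factor `B_i` lies in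
`BD(2^i, n) ⊆ BD(b, n)` because the blocks of size `2^i` refine those of size `b`, and
`BD(b, n)` is closed under multiplication, being a subalgebra of matrices. -/

namespace BD

variable {𝔽 : Type*} [Field 𝔽] {b n : ℕ}

theorem one : BD b n (1 : Matrix (Fin n) (Fin n) 𝔽) := by
  intro i j h
  exact one_apply_ne fun hij => h (congrArg (fun k : Fin n => k.val / b) hij)

theorem mul {R S : Matrix (Fin n) (Fin n) 𝔽} (hR : BD b n R) (hS : BD b n S) :
    BD b n (R * S) := by
  intro i j h
  rw [mul_apply]
  refine Finset.sum_eq_zero fun l _ => ?_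
  by_cases hil : i.val / b = l.val / b
  · rw [hS l j (hil ▸ h), mul_zero]
  · rw [hR i l hil, zero_mul]

theorem list_prod {L : List (Matrix (Fin n) (Fin n) 𝔽)} (hL : ∀ M ∈ L, BD b n M) :
    BD b n L.prod :=
  List.prod_induction _ (fun _ _ => mul) one hL

theorem of_dvd_s9 {c : ℕ} (hbc : b ∣ c) {R : Matrix (Fin n) (Fin n) 𝔽} (hR : BD b n R) :
    BD c n R := by
  obtain ⟨d, rfl⟩ := hbc
  intro i j h
  refine hR i j fun hij => h ?_
  rw [← Nat.div_div_eq_div_mul, ← Nat.div_div_eq_div_mul, hij]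

end BD

theorem butterfly_suffix_in_bd_general {𝔽 : Type*} [Field 𝔽] (s n b : ℕ)
    (hb : b = 2 ^ s)
    (B : ℕ → Matrix (Fin n) (Fin n) 𝔽)
    (hB : ∀ i, 1 ≤ i → i ≤ s → BD (2 ^ i) n (B i) ∧ DB (2 ^ (i - 1)) n (B i)) :
    BD b n (((List.range s).map fun t => B (s - t)).prod) := by
  subst hb
  refine BD.list_prod fun M hM => ?_
  obtain ⟨t, ht, rfl⟩ := List.mem_map.mp hM
  have ht : t < s := List.mem_range.mp ht
  exact (hB (s - t) (by omega) (Nat.sub_le s t)).1.of_dvd_s9 (pow_dvd_pow 2 (Nat.sub_le s t))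

/-- for `n = 2^k`, `b = 2^s` with `1 < b ≤ n`, and butterfly factor matrices
`B_i ∈ BD(2^i, n) ∩ DB(2^{i-1}, n)` for `2 ≤ 2^i ≤ b`, the product
`B_b · B_{b/2} · ⋯ · B_2` lies in `BD(b,n)`. -/
theorem butterfly_suffix_in_bd {𝔽 : Type*} [Field 𝔽] (k s n b : ℕ)
    (hn : n = 2 ^ k) (hb : b = 2 ^ s) (hs : 1 ≤ s) (hsk : s ≤ k)
    (B : ℕ → Matrix (Fin n) (Fin n) 𝔽)
    (hB : ∀ i, 1 ≤ i → i ≤ s → BD (2 ^ i) n (B i) ∧ DB (2 ^ (i - 1)) n (B i)) :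
    BD b n (((List.range s).map fun t => B (s - t)).prod) :=
  butterfly_suffix_in_bd_general s n b hb B hB
end

section
/- Let b, q ≥ 1 be integers. Suppose (M̃_{ij})_{1 ≤ i,j ≤ b} are q×q matrices over a field 𝔽 with M̃_{ij} = A_i · D_{ij} · C_j, where each A_i and each C_j is an invertible q×q matrix and each D_{ij} is an invertible diagonal q×q matrix. Define F(i,j) = M̃_{i1}⁻¹ · M̃_{ij} · M̃_{1j}⁻¹ · M̃_{11}. Then for all 1 ≤ i, j ≤ b, C_1 · F(i,j) · C_1⁻¹ = D_{i1}⁻¹ · D_{ij} · D_{1j}⁻¹ · D_{11}; in particular C_1 · F(i,j) · C_1⁻¹ is a diagonal matrix. -/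
open Matrix

/-!
Writing `M̃ᵢⱼ = Aᵢ Dᵢⱼ Cⱼ`, a product `M̃ᵢⱼ⁻¹ M̃ᵢₖ` along a row cancels the common factor `Aᵢ`
and leaves `Cⱼ⁻¹ (Dᵢⱼ⁻¹ Dᵢₖ) Cₖ`. Hence `F(i,j)` is a product of two such terms in which the inner
`Cⱼ Cⱼ⁻¹` cancels too, so `F(i,j)` is `C₁⁻¹ (Dᵢ₁⁻¹ Dᵢⱼ D₁ⱼ⁻¹ D₁₁) C₁`, a conjugate of a product
of diagonal matrices.
-/

namespace Matrix

variable {n α : Type*} [Fintype n]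

theorem IsDiag.mul [NonUnitalNonAssocSemiring α] {A B : Matrix n n α} (hA : A.IsDiag)
    (hB : B.IsDiag) : (A * B).IsDiag := by
  classical
  rw [← hA.diagonal_diag, ← hB.diagonal_diag, diagonal_mul_diagonal]
  exact isDiag_diagonal _

theorem IsDiag.inv [DecidableEq n] [CommRing α] {A : Matrix n n α} (hA : A.IsDiag) :
    A⁻¹.IsDiag := by
  rw [← hA.diagonal_diag, inv_diagonal]
  exact isDiag_diagonal _

variable [DecidableEq n] [CommRing α]

theorem inv_mul_cancel_common_left {A C C' : Matrix n n α} (D D' : Matrix n n α)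
    (hA : IsUnit A) : (A * D * C)⁻¹ * (A * D' * C') = C⁻¹ * (D⁻¹ * D') * C' := by
  rw [isUnit_iff_isUnit_det] at hA
  simp only [mul_inv_rev, Matrix.mul_assoc, nonsing_inv_mul_cancel_left A _ hA]

theorem conj_mul_conj_cancel {C C' : Matrix n n α} (X Y : Matrix n n α) (hC : IsUnit C)
    (hC' : IsUnit C') : C * ((C⁻¹ * X * C') * (C'⁻¹ * Y * C)) * C⁻¹ = X * Y := by
  rw [isUnit_iff_isUnit_det] at hC hC'
  simp only [Matrix.mul_assoc]
  rw [mul_nonsing_inv C hC, Matrix.mul_one, mul_nonsing_inv_cancel_left C' _ hC',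
    mul_nonsing_inv_cancel_left C _ hC]

end Matrix

theorem simultaneous_diag_identity_general {𝔽 : Type*} [Field 𝔽] (b q : ℕ)
    (hb : 1 ≤ b)
    (A C : Fin b → Matrix (Fin q) (Fin q) 𝔽)
    (D : Fin b → Fin b → Matrix (Fin q) (Fin q) 𝔽)
    (hA : ∀ i, IsUnit (A i)) (hC : ∀ j, IsUnit (C j))
    (hD : ∀ i j, IsUnit (D i j) ∧ (D i j).IsDiag)
    (Mt : Fin b → Fin b → Matrix (Fin q) (Fin q) 𝔽)
    (hM : ∀ i j, Mt i j = A i * D i j * C j)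
    (F : Fin b → Fin b → Matrix (Fin q) (Fin q) 𝔽)
    (hF : ∀ i j, F i j = (Mt i ⟨0, hb⟩)⁻¹ * Mt i j * (Mt ⟨0, hb⟩ j)⁻¹ * Mt ⟨0, hb⟩ ⟨0, hb⟩) :
    ∀ i j : Fin b,
      C ⟨0, hb⟩ * F i j * (C ⟨0, hb⟩)⁻¹ =
        (D i ⟨0, hb⟩)⁻¹ * D i j * (D ⟨0, hb⟩ j)⁻¹ * D ⟨0, hb⟩ ⟨0, hb⟩ ∧
      (C ⟨0, hb⟩ * F i j * (C ⟨0, hb⟩)⁻¹).IsDiag := by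
  intro i j
  set e : Fin b := ⟨0, hb⟩
  have hF' : F i j = ((C e)⁻¹ * ((D i e)⁻¹ * D i j) * C j) * ((C j)⁻¹ * ((D e j)⁻¹ * D e e) * C e) := by
    rw [hF, Matrix.mul_assoc _ (Mt e j)⁻¹, hM, hM, hM, hM,
      inv_mul_cancel_common_left _ _ (hA i), inv_mul_cancel_common_left _ _ (hA e)]
  have key : C e * F i j * (C e)⁻¹ = (D i e)⁻¹ * D i j * (D e j)⁻¹ * D e e := by
    rw [hF', conj_mul_conj_cancel _ _ (hC e) (hC j)]
    simp only [Matrix.mul_assoc]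
  refine ⟨key, key ▸ ?_⟩
  exact (((hD i e).2.inv.mul (hD i j).2).mul (hD e j).2.inv).mul (hD e e).2

/-- with `M̃_{ij} = A_i D_{ij} C_j` (all factors invertible, `D_{ij}` diagonal)
and `F(i,j) = M̃_{i1}⁻¹ M̃_{ij} M̃_{1j}⁻¹ M̃_{11}`, we have
`C_1 F(i,j) C_1⁻¹ = D_{i1}⁻¹ D_{ij} D_{1j}⁻¹ D_{11}`, which is diagonal. -/
theorem simultaneous_diag_identity {𝔽 : Type*} [Field 𝔽] (b q : ℕ)
    (hb : 1 ≤ b) (hq : 1 ≤ q)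
    (A C : Fin b → Matrix (Fin q) (Fin q) 𝔽)
    (D : Fin b → Fin b → Matrix (Fin q) (Fin q) 𝔽)
    (hA : ∀ i, IsUnit (A i)) (hC : ∀ j, IsUnit (C j))
    (hD : ∀ i j, IsUnit (D i j) ∧ (D i j).IsDiag)
    (Mt : Fin b → Fin b → Matrix (Fin q) (Fin q) 𝔽)
    (hM : ∀ i j, Mt i j = A i * D i j * C j)
    (F : Fin b → Fin b → Matrix (Fin q) (Fin q) 𝔽)
    (hF : ∀ i j, F i j = (Mt i ⟨0, hb⟩)⁻¹ * Mt i j * (Mt ⟨0, hb⟩ j)⁻¹ * Mt ⟨0, hb⟩ ⟨0, hb⟩) :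
    ∀ i j : Fin b,
      C ⟨0, hb⟩ * F i j * (C ⟨0, hb⟩)⁻¹ =
        (D i ⟨0, hb⟩)⁻¹ * D i j * (D ⟨0, hb⟩ j)⁻¹ * D ⟨0, hb⟩ ⟨0, hb⟩ ∧
      (C ⟨0, hb⟩ * F i j * (C ⟨0, hb⟩)⁻¹).IsDiag :=
  simultaneous_diag_identity_general b q hb A C D hA hC hD Mt hM F hF
end
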